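/- Let C be a chain component of a continuous map f : X → X on a compact metric space and let g = f|_C. For any x, y ∈ C: x ∼_C y (i.e., x ∼_{C,δ} y for all δ > 0) if and only if (x, y) is a chain proximal pair for g, meaning for every δ > 0 there exist δ-chains (x_i)_{i=0}^k and (y_i)_{i=0}^k of g of the same length with x_0 = x, y_0 = y, and x_k = y_k. -/

import Mathlib

open Filter Topology Metric Set

variable {X : Type*} [MetricSpace X]

/-- There is a `δ`-chain of `f` from `x` to `y`. -/
def ChainReach (f : X → X) (δ : ℝ) (x y : X) : Prop :=
  ∃ k : ℕ, 0 < k ∧ ∃ c : ℕ → X, c 0 = x ∧ c k = y ∧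
    ∀ i < k, dist (f (c i)) (c (i + 1)) ≤ δ

/-- `x → y` : for every `δ > 0` there is a `δ`-chain from `x` to `y`. -/
def ChainTo (f : X → X) (x y : X) : Prop := ∀ δ > 0, ChainReach f δ x y

/-- The chain recurrent set. -/
def CR (f : X → X) : Set X := {x | ChainTo f x x}

/-- The relation `x ↔ y`. -/
def ChainRel (f : X → X) (x y : X) : Prop := ChainTo f x y ∧ ChainTo f y x

/-- A chain component: an equivalence class of `↔` on `CR f`. -/
def IsChainComponent (f : X → X) (C : Set X) : Prop :=
  ∃ x ∈ CR f, C = {y | y ∈ CR f ∧ ChainRel f x y}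

/-- A `δ`-chain of `f` from `x` to `y` of length `k`, all of whose points lie in `S`. -/
def ChainInLen (f : X → X) (S : Set X) (δ : ℝ) (x y : X) (k : ℕ) : Prop :=
  0 < k ∧ ∃ c : ℕ → X, (∀ i ≤ k, c i ∈ S) ∧ c 0 = x ∧ c k = y ∧
    ∀ i < k, dist (f (c i)) (c (i + 1)) ≤ δ

/-- There is a `δ`-chain from `x` to `y` inside `S`. -/
def ChainInReach (f : X → X) (S : Set X) (δ : ℝ) (x y : X) : Prop :=
  ∃ k, ChainInLen f S δ x y k

/-- `f` restricted to `S` is chain transitive. -/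
def ChainTransitiveOn (f : X → X) (S : Set X) : Prop :=
  ∀ x ∈ S, ∀ y ∈ S, ∀ δ > 0, ChainInReach f S δ x y

/-- The set of lengths of `δ`-cycles of `f` restricted to `C`. -/
def cycLengths (f : X → X) (C : Set X) (δ : ℝ) : Set ℕ :=
  {k | ∃ x ∈ C, ChainInLen f C δ x x k}

/-- The relation `∼_{C,δ}` : there is a `δ`-chain in `C` from `x` to `y` whose
length is divisible by the gcd `m(C,δ)` of all `δ`-cycle lengths (divisibility by
the gcd is expressed via common divisors). -/
def relCdelta (f : X → X) (C : Set X) (δ : ℝ) (x y : X) : Prop :=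
  ∃ k : ℕ, (∀ d : ℕ, (∀ l ∈ cycLengths f C δ, d ∣ l) → d ∣ k) ∧
    ChainInLen f C δ x y k

/-- The chain proximal relation `∼_C`. -/
def relC (f : X → X) (C : Set X) (x y : X) : Prop := ∀ δ > 0, relCdelta f C δ x y

/-- The class of `∼_{C,δ}` containing `x`. -/
def classCdelta (f : X → X) (C : Set X) (δ : ℝ) (x : X) : Set X :=
  {y | y ∈ C ∧ relCdelta f C δ x y}

/-- The class of `∼_C` containing `x`. -/
def classC (f : X → X) (C : Set X) (x : X) : Set X :=
  {y | y ∈ C ∧ relC f C x y}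

/-- The basin of attraction of a set. -/
def basin (f : X → X) (C : Set X) : Set X :=
  {x | Tendsto (fun i => infDist (f^[i] x) C) atTop (𝓝 0)}

/-- `V^s(D)` for the class `D` of `∼_C` containing the point `x ∈ C`. -/
def Vs (f : X → X) (C : Set X) (x : X) : Set X :=
  {z | z ∈ basin f C ∧ ∀ δ > 0,
    Tendsto (fun i => infDist (f^[i] z) (f^[i] '' classCdelta f C δ x)) atTop (𝓝 0)}

/-!
On a compact space, `f` restricted to a chain component `C` is chain transitive: fine chains
between points of `C` stay close to `C` (a limit of points far from `C` on ever finer chains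
through `C` would be chain equivalent to `C`), so by uniform continuity they can be pushed into
`C` at the cost of a slightly coarser step.

Chain transitivity makes the gcd of the lengths of `δ`-cycles at a single `y ∈ C` divide every
`δ`-cycle length in `C` (go from `y` to the cycle and back), so the cycles at `y` realise every
large multiple of `m(C,δ)`. A chain `x → y` of length divisible by `m(C,δ)`, prolonged by a long
cycle at `y`, is then matched by a cycle at `y` of the same length. Conversely, two chains of
length `k` from `x` and `y` to a common `z`, both prolonged by a chain `z → y`, give a chain
`x → y` and a cycle at `y` of the same length.
-/

theorem Nat.exists_mem_of_ge_of_setGcd_dvd {S : Set ℕ}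
    (hS : ∀ a ∈ S, ∀ b ∈ S, a + b ∈ S) :
    ∃ N, ∀ n ≥ N, Nat.setGcd S ∣ n → n ∈ S := by
  have hclosure : ∀ n ∈ AddSubmonoid.closure S, n = 0 ∨ n ∈ S := fun n hn =>
    AddSubmonoid.closure_induction (fun _ h => .inr h) (.inl rfl)
      (fun a b _ _ ha hb => by
        rcases ha with rfl | ha
        · simpa using hb
        rcases hb with rfl | hb
        · simpa using Or.inr ha
        exact .inr (hS a ha b hb)) hn
  obtain ⟨N, hN⟩ := Nat.exists_mem_closure_of_ge S
  refine ⟨max N 1, fun n hn hdvd => ?_⟩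
  exact (hclosure n (hN n (le_of_max_le_left hn) hdvd)).resolve_left (by omega)

section SeqAppend

variable {α : Type*} {c d : ℕ → α} {k l : ℕ}

def seqAppend (c : ℕ → α) (k : ℕ) (d : ℕ → α) (i : ℕ) : α :=
  if i ≤ k then c i else d (i - k)

theorem seqAppend_zero : seqAppend c k d 0 = c 0 :=
  if_pos k.zero_le

theorem seqAppend_add (hcd : c k = d 0) (l : ℕ) : seqAppend c k d (k + l) = d l := by
  unfold seqAppend
  split_ifs with h
  · obtain rfl : l = 0 := by omega
    exact hcd
  · rw [Nat.add_sub_cancel_left]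

theorem seqAppend_steps {R : α → α → Prop} (hc : ∀ i < k, R (c i) (c (i + 1)))
    (hd : ∀ i < l, R (d i) (d (i + 1))) (hcd : c k = d 0) :
    ∀ i < k + l, R (seqAppend c k d i) (seqAppend c k d (i + 1)) := by
  intro i hi
  rcases lt_or_ge i k with h | h
  · simpa only [seqAppend, if_pos h.le, if_pos (Nat.succ_le_of_lt h)] using
      hc i h
  · obtain ⟨j, rfl⟩ := Nat.exists_eq_add_of_le h
    rw [seqAppend_add hcd, Nat.add_assoc, seqAppend_add hcd]
    exact hd j (by omega)

theorem seqAppend_mem {S : Set α} (hc : ∀ i ≤ k, c i ∈ S) (hd : ∀ i ≤ l, d i ∈ S) :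
    ∀ i ≤ k + l, seqAppend c k d i ∈ S := by
  intro i hi
  unfold seqAppend
  split_ifs with h
  · exact hc i h
  · exact hd (i - k) (by omega)

end SeqAppend

section Chains

variable {f : X → X} {S : Set X} {δ δ' : ℝ} {x y z : X} {k l : ℕ}

theorem ChainReach.mono (h : ChainReach f δ x y) (hδ : δ ≤ δ') : ChainReach f δ' x y := by
  obtain ⟨k, hk, c, hc0, hck, hc⟩ := h
  exact ⟨k, hk, c, hc0, hck, fun i hi => (hc i hi).trans hδ⟩

theorem ChainReach.trans (h₁ : ChainReach f δ x y) (h₂ : ChainReach f δ y z) :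
    ChainReach f δ x z := by
  obtain ⟨k, hk, c, hc0, hck, hc⟩ := h₁
  obtain ⟨l, -, d, hd0, hdl, hd⟩ := h₂
  have hcd : c k = d 0 := hck.trans hd0.symm
  exact ⟨k + l, by omega, seqAppend c k d, by rw [seqAppend_zero, hc0],
    by rw [seqAppend_add hcd, hdl],
    seqAppend_steps (R := fun u v => dist (f u) v ≤ δ) hc hd hcd⟩

theorem chainReach_of_steps {c : ℕ → X} (hc : ∀ i < k, dist (f (c i)) (c (i + 1)) ≤ δ)
    {i j : ℕ} (hij : i < j) (hjk : j ≤ k) : ChainReach f δ (c i) (c j) := by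
  refine ⟨j - i, by omega, fun t => c (i + t), rfl,
    by simp only [Nat.add_sub_cancel' hij.le], fun t ht => ?_⟩
  simpa only [Nat.add_assoc] using hc (i + t) (by omega)

theorem ChainReach.update_target (h : ChainReach f δ x y) (z : X) :
    ChainReach f (δ + dist y z) x z := by
  obtain ⟨k, hk, c, hc0, rfl, hc⟩ := h
  refine ⟨k, hk, Function.update c k z, by rw [Function.update_of_ne hk.ne, hc0], by simp,
    fun i hi => ?_⟩
  rw [Function.update_of_ne hi.ne]
  rcases eq_or_ne (i + 1) k with rfl | hik
  · rw [Function.update_self]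
    linarith [hc i hi, dist_triangle (f (c i)) (c (i + 1)) z]
  · rw [Function.update_of_ne hik]
    linarith [hc i hi, dist_nonneg (x := c k) (y := z)]

theorem ChainReach.update_source (h : ChainReach f δ y x) (z : X) :
    ChainReach f (δ + dist (f y) (f z)) z x := by
  obtain ⟨k, hk, c, rfl, hck, hc⟩ := h
  refine ⟨k, hk, Function.update c 0 z, by simp, by rw [Function.update_of_ne hk.ne', hck],
    fun i hi => ?_⟩
  rw [Function.update_of_ne (Nat.succ_ne_zero i)]
  rcases eq_or_ne i 0 with rfl | hi0
  · rw [Function.update_self]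
    linarith [hc 0 hi, dist_triangle (f z) (f (c 0)) (c 1), dist_comm (f z) (f (c 0))]
  · rw [Function.update_of_ne hi0]
    linarith [hc i hi, dist_nonneg (x := f (c 0)) (y := f z)]

theorem ChainTo.trans (h₁ : ChainTo f x y) (h₂ : ChainTo f y z) : ChainTo f x z :=
  fun δ hδ => (h₁ δ hδ).trans (h₂ δ hδ)

theorem ChainRel.symm (h : ChainRel f x y) : ChainRel f y x :=
  ⟨h.2, h.1⟩

theorem ChainRel.trans (h₁ : ChainRel f x y) (h₂ : ChainRel f y z) : ChainRel f x z :=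
  ⟨h₁.1.trans h₂.1, h₂.2.trans h₁.2⟩

theorem chainTo_of_tendsto {ι : Type*} {L : Filter ι} [L.NeBot] {u : ι → X} {η : ι → ℝ}
    (hu : Tendsto u L (𝓝 z)) (hη : Tendsto η L (𝓝 0))
    (h : ∀ᶠ n in L, ChainReach f (η n) x (u n)) : ChainTo f x z := by
  intro δ hδ
  have hlim : Tendsto (fun n => η n + dist (u n) z) L (𝓝 0) := by
    simpa using hη.add (tendsto_iff_dist_tendsto_zero.1 hu)
  obtain ⟨n, hn, hnδ⟩ := (h.and (hlim.eventually (ge_mem_nhds hδ))).exists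
  exact (hn.update_target z).mono hnδ

theorem chainTo_of_tendsto_source {ι : Type*} {L : Filter ι} [L.NeBot] {u : ι → X}
    {η : ι → ℝ} (hf : ContinuousAt f z) (hu : Tendsto u L (𝓝 z))
    (hη : Tendsto η L (𝓝 0))
    (h : ∀ᶠ n in L, ChainReach f (η n) (u n) x) : ChainTo f z x := by
  intro δ hδ
  have hlim : Tendsto (fun n => η n + dist (f (u n)) (f z)) L (𝓝 0) := by
    simpa using hη.add (tendsto_iff_dist_tendsto_zero.1 (hf.tendsto.comp hu))
  obtain ⟨n, hn, hnδ⟩ := (h.and (hlim.eventually (ge_mem_nhds hδ))).exists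
  exact (hn.update_source z).mono hnδ

theorem chain_steps_le_of_forall_dist_lt {c c' : ℕ → X} {ρ η : ℝ}
    (hf : ∀ u v, dist u v < ρ → dist (f u) (f v) < η)
    (hc : ∀ i < k, dist (f (c i)) (c (i + 1)) ≤ δ)
    (hcc' : ∀ i ≤ k, dist (c i) (c' i) < ρ) :
    ∀ i < k, dist (f (c' i)) (c' (i + 1)) ≤ η + δ + ρ := by
  intro i hi
  have hfi := hf _ _ (dist_comm (c i) (c' i) ▸ hcc' i hi.le)
  linarith [hc i hi, hcc' (i + 1) hi,
    dist_triangle4 (f (c' i)) (f (c i)) (c (i + 1)) (c' (i + 1))]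

theorem ChainInLen.trans (h₁ : ChainInLen f S δ x y k) (h₂ : ChainInLen f S δ y z l) :
    ChainInLen f S δ x z (k + l) := by
  obtain ⟨hk, c, hcS, hc0, hck, hc⟩ := h₁
  obtain ⟨-, d, hdS, hd0, hdl, hd⟩ := h₂
  have hcd : c k = d 0 := hck.trans hd0.symm
  exact ⟨by omega, seqAppend c k d, seqAppend_mem hcS hdS, by rw [seqAppend_zero, hc0],
    by rw [seqAppend_add hcd, hdl],
    seqAppend_steps (R := fun u v => dist (f u) v ≤ δ) hc hd hcd⟩

theorem ChainInLen.target_mem (h : ChainInLen f S δ x y k) : y ∈ S := by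
  obtain ⟨-, c, hcS, -, rfl, -⟩ := h
  exact hcS k le_rfl

end Chains

section ChainComponent

variable {f : X → X} {C : Set X} {x : X}

theorem IsChainComponent.mem_iff (hC : IsChainComponent f C) (hx : x ∈ C) {z : X} :
    z ∈ C ↔ ChainRel f x z := by
  obtain ⟨x₀, -, rfl⟩ := hC
  exact ⟨fun hz => hx.2.symm.trans hz.2, fun hz => ⟨hz.2.trans hz.1, hx.2.trans hz⟩⟩

theorem IsChainComponent.exists_forall_chain_mem_thickening [CompactSpace X] (hf : Continuous f)
    (hC : IsChainComponent f C) {ε : ℝ} (hε : 0 < ε) :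
    ∃ δ > 0, ∀ (k : ℕ) (c : ℕ → X), c 0 ∈ C → c k ∈ C →
      (∀ i < k, dist (f (c i)) (c (i + 1)) ≤ δ) → ∀ i ≤ k, c i ∈ thickening ε C := by
  rcases C.eq_empty_or_nonempty with rfl | ⟨x, hx⟩
  · exact ⟨1, one_pos, fun _ _ h => h.elim⟩
  by_contra! H
  have hfar : ∀ n : ℕ, ∃ z ∉ thickening ε C,
      ChainReach f (1 / (n + 1)) x z ∧ ChainReach f (1 / (n + 1)) z x := by
    intro n
    have hδ : (0 : ℝ) < 1 / (n + 1) := Nat.one_div_pos_of_nat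
    obtain ⟨k, c, hc0, hck, hc, i, hik, hi⟩ := H _ hδ
    have hi0 : 0 < i :=
      Nat.pos_of_ne_zero (by rintro rfl; exact hi (self_subset_thickening hε C hc0))
    have hik : i < k :=
      hik.lt_of_ne (by rintro rfl; exact hi (self_subset_thickening hε C hck))
    exact ⟨c i, hi, (((hC.mem_iff hx).1 hc0).1 _ hδ).trans (chainReach_of_steps hc hi0 hik.le),
      (chainReach_of_steps hc hik le_rfl).trans (((hC.mem_iff hx).1 hck).2 _ hδ)⟩
  choose z hz hxz hzx using hfar
  obtain ⟨z₀, φ, hφ, hlim⟩ := CompactSpace.tendsto_subseq z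
  have hη : Tendsto (fun n => 1 / ((φ n : ℝ) + 1)) atTop (𝓝 0) :=
    tendsto_one_div_add_atTop_nhds_zero_nat.comp hφ.tendsto_atTop
  have hz₀ : z₀ ∈ C := (hC.mem_iff hx).2
    ⟨chainTo_of_tendsto hlim hη (.of_forall fun n => hxz (φ n)),
      chainTo_of_tendsto_source hf.continuousAt hlim hη (.of_forall fun n => hzx (φ n))⟩
  exact isOpen_thickening.isClosed_compl.mem_of_tendsto hlim (.of_forall fun n => hz (φ n))
    (self_subset_thickening hε C hz₀)

theorem IsChainComponent.chainTransitiveOn [CompactSpace X] (hf : Continuous f)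
    (hC : IsChainComponent f C) : ChainTransitiveOn f C := by
  intro a ha b hb ε hε
  obtain ⟨ρ, hρ, hfρ⟩ := Metric.uniformContinuous_iff.1
    (CompactSpace.uniformContinuous_of_continuous hf) (ε / 3) (by positivity)
  set ε' := min ρ (ε / 3)
  have hε' : 0 < ε' := lt_min hρ (by positivity)
  obtain ⟨δ, hδ, hthick⟩ := hC.exists_forall_chain_mem_thickening hf hε'
  set δ' := min δ (ε / 3)
  obtain ⟨k, hk, c, hc0, hck, hc⟩ := ((hC.mem_iff ha).1 hb).1 δ' (by positivity)
  have hnear := hthick k c (hc0 ▸ ha) (hck ▸ hb) fun i hi => (hc i hi).trans (min_le_left _ _)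
  have hw : ∀ i ≤ k, ∃ w ∈ C, dist (c i) w < ε' ∧ (c i ∈ C → w = c i) := by
    intro i hi
    by_cases hci : c i ∈ C
    · exact ⟨c i, hci, by simpa using hε', fun _ => rfl⟩
    · obtain ⟨w, hwC, hw⟩ := mem_thickening_iff.1 (hnear i hi)
      exact ⟨w, hwC, hw, fun h => absurd h hci⟩
  have : Nonempty X := ⟨a⟩
  choose! w hwC hwd hwc using hw
  refine ⟨k, hk, w, hwC, by rw [hwc 0 k.zero_le (hc0 ▸ ha), hc0],
    by rw [hwc k le_rfl (hck ▸ hb), hck], fun i hi => ?_⟩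
  linarith [chain_steps_le_of_forall_dist_lt (fun u v h => hfρ (h.trans_le (min_le_left _ _)))
    hc hwd i hi, min_le_right δ (ε / 3), min_le_right ρ (ε / 3)]

end ChainComponent

section CycleLengths

variable {f : X → X} {C : Set X} {δ : ℝ} {x y : X}

theorem ChainTransitiveOn.setGcd_dvd_of_mem_cycLengths (hT : ChainTransitiveOn f C)
    (hδ : 0 < δ) (hy : y ∈ C) {l : ℕ} (hl : l ∈ cycLengths f C δ) :
    Nat.setGcd {n | ChainInLen f C δ y y n} ∣ l := by
  obtain ⟨u, hu, hcyc⟩ := hl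
  obtain ⟨p, hp⟩ := hT y hy u hu δ hδ
  obtain ⟨q, hq⟩ := hT u hu y hy δ hδ
  have hpq := Nat.setGcd_dvd_of_mem (show p + q ∈ {n | ChainInLen f C δ y y n} from hp.trans hq)
  have hplq := Nat.setGcd_dvd_of_mem
    (show p + l + q ∈ {n | ChainInLen f C δ y y n} from (hp.trans hcyc).trans hq)
  rw [Nat.add_right_comm] at hplq
  exact (Nat.dvd_add_right hpq).1 hplq

theorem ChainTransitiveOn.relCdelta_iff (hT : ChainTransitiveOn f C) (hδ : 0 < δ) (hy : y ∈ C) :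
    relCdelta f C δ x y ↔ ∃ k z, ChainInLen f C δ x z k ∧ ChainInLen f C δ y z k := by
  constructor
  · rintro ⟨k, hdvd, hxy⟩
    have hgk := hdvd _ fun l hl => hT.setGcd_dvd_of_mem_cycLengths hδ hy hl
    obtain ⟨N, hN⟩ := Nat.exists_mem_of_ge_of_setGcd_dvd
      (S := {n | ChainInLen f C δ y y n}) fun a ha b hb => ha.trans hb
    obtain ⟨n₀, hn₀⟩ := hT y hy y hy δ hδ
    have hn₀N : N ≤ N * n₀ := Nat.le_mul_of_pos_right N hn₀.1
    have hgn : Nat.setGcd {n | ChainInLen f C δ y y n} ∣ N * n₀ :=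
      (Nat.setGcd_dvd_of_mem hn₀).mul_left N
    have hcyc : ChainInLen f C δ y y (N * n₀) := hN _ hn₀N hgn
    have hcyc' : ChainInLen f C δ y y (k + N * n₀) :=
      hN _ (hn₀N.trans (Nat.le_add_left _ _)) (hgk.add hgn)
    exact ⟨k + N * n₀, y, hxy.trans hcyc, hcyc'⟩
  · rintro ⟨k, z, hxz, hyz⟩
    obtain ⟨q, hzy⟩ := hT z hxz.target_mem y hy δ hδ
    exact ⟨k + q, fun d hd => hd _ ⟨y, hy, hyz.trans hzy⟩, hxz.trans hzy⟩

end CycleLengths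

theorem exists_proximal_chains_iff {f : X → X} {C : Set X} {δ : ℝ} {x y : X} :
    (∃ k : ℕ, 0 < k ∧ ∃ c c' : ℕ → X,
        (∀ i ≤ k, c i ∈ C ∧ c' i ∈ C) ∧ c 0 = x ∧ c' 0 = y ∧ c k = c' k ∧
        ∀ i < k, dist (f (c i)) (c (i + 1)) ≤ δ ∧ dist (f (c' i)) (c' (i + 1)) ≤ δ) ↔
      ∃ k z, ChainInLen f C δ x z k ∧ ChainInLen f C δ y z k := by
  constructor
  · rintro ⟨k, hk, c, c', hC, hc0, hc'0, hck, hc⟩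
    exact ⟨k, c k, ⟨hk, c, fun i hi => (hC i hi).1, hc0, rfl, fun i hi => (hc i hi).1⟩,
      ⟨hk, c', fun i hi => (hC i hi).2, hc'0, hck.symm, fun i hi => (hc i hi).2⟩⟩
  · rintro ⟨k, z, ⟨hk, c, hcC, hc0, hck, hc⟩, ⟨-, c', hc'C, hc'0, hc'k, hc'⟩⟩
    exact ⟨k, hk, c, c', fun i hi => ⟨hcC i hi, hc'C i hi⟩, hc0, hc'0, hck.trans hc'k.symm,
      fun i hi => ⟨hc i hi, hc' i hi⟩⟩

theorem stmt9_general {X : Type*} [MetricSpace X] [CompactSpace X]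
    (f : X → X) (hf : Continuous f) (C : Set X) (hC : IsChainComponent f C)
    (x : X) (y : X) (hy : y ∈ C) :
    relC f C x y ↔
      ∀ δ > 0, ∃ k : ℕ, 0 < k ∧ ∃ c c' : ℕ → X,
        (∀ i ≤ k, c i ∈ C ∧ c' i ∈ C) ∧ c 0 = x ∧ c' 0 = y ∧ c k = c' k ∧
        ∀ i < k, dist (f (c i)) (c (i + 1)) ≤ δ ∧
          dist (f (c' i)) (c' (i + 1)) ≤ δ := by
  have hT : ChainTransitiveOn f C := hC.chainTransitiveOn hf
  exact forall₂_congr fun δ hδ =>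
    (hT.relCdelta_iff hδ hy).trans exists_proximal_chains_iff.symm

/-- `x ∼_C y` iff `(x,y)` is a chain proximal pair for `f|_C`. -/
theorem stmt9 {X : Type*} [MetricSpace X] [CompactSpace X]
    (f : X → X) (hf : Continuous f) (C : Set X) (hC : IsChainComponent f C)
    (x : X) (hx : x ∈ C) (y : X) (hy : y ∈ C) :
    relC f C x y ↔
      ∀ δ > 0, ∃ k : ℕ, 0 < k ∧ ∃ c c' : ℕ → X,
        (∀ i ≤ k, c i ∈ C ∧ c' i ∈ C) ∧ c 0 = x ∧ c' 0 = y ∧ c k = c' k ∧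
        ∀ i < k, dist (f (c i)) (c (i + 1)) ≤ δ ∧
          dist (f (c' i)) (c' (i + 1)) ≤ δ :=
  stmt9_general f hf C hC x y hy
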